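/- arXiv:1708.06580 — 4 statements merged into one kernel-verified Lean document; each statement's English description precedes it below -/
import Mathlib

section
/- Suppose X ∈ S^m and x ∈ ℝ^m satisfy: [[X, x],[x^T, 1]] ⪰ 0, diag(X) = x, and ⟨a_i a_i^T, X⟩ = b_i^2 for all i ∈ V\{t}.ingThen for all distinct i, j ∈ V\{t}, the squared linear constraint ⟨a_i a_j^T, X⟩ = b_i b_j holds automatically. -/
/-!
Only `b_s` and `b_t` are nonzero, so for distinct `i, j ≠ t` one of `b_i, b_j` vanishes, say
`b_i = 0`. Then `a_iᵀ X a_i = b_i² = 0` with `X ⪰ 0` (a principal block of the PSD matrix),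
hence `X a_i = 0`, and `a_iᵀ X a_j = 0 = b_i b_j` by symmetry of `X`.
-/

open Finset Matrix

theorem Matrix.sum_sum_mul_mul_eq_dotProduct_mulVec {m n R : Type*} [Fintype m] [Fintype n]
    [CommSemiring R] (M : Matrix m n R) (v : m → R) (w : n → R) :
    ∑ e, ∑ f, v e * w f * M e f = v ⬝ᵥ M *ᵥ w := by
  simp only [dotProduct, mulVec, mul_sum]
  exact sum_congr rfl fun e _ => sum_congr rfl fun f _ => by ring

theorem Matrix.IsSymm.dotProduct_mulVec_eq_zero_of_mulVec_eq_zero {n R : Type*} [Fintype n]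
    [CommSemiring R] {M : Matrix n n R} (hM : M.IsSymm) {v : n → R} (hv : M *ᵥ v = 0)
    (w : n → R) : v ⬝ᵥ M *ᵥ w = 0 := by
  rw [dotProduct_mulVec, ← mulVec_transpose, hM.eq, hv, zero_dotProduct]

theorem eq_zero_or_eq_zero_of_eq_zero_off_pair {V R : Type*} [Zero R] {s t : V} {b : V → R}
    (hb : ∀ k, k ≠ s → k ≠ t → b k = 0) {i j : V} (hit : i ≠ t) (hjt : j ≠ t) (hij : i ≠ j) :
    b i = 0 ∨ b j = 0 := by
  by_cases his : i = s
  · exact Or.inr (hb j (fun hjs => hij (his.trans hjs.symm)) hjt)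
  · exact Or.inl (hb i his hit)

theorem squared_linear_constraints_redundant_general {V : Type*} [DecidableEq V]
    (m : ℕ) (s t : V) (a : V → Fin m → ℝ) (b : V → ℝ)
    (hb : ∀ i, b i = if i = s then 1 else if i = t then -1 else 0)
    (X : Matrix (Fin m) (Fin m) ℝ) (x : Fin m → ℝ)
    (hY : (Matrix.fromBlocks X (Matrix.of fun e (_ : Unit) => x e)
        (Matrix.of fun (_ : Unit) e => x e) 1).PosSemidef)
    (hsq : ∀ i, i ≠ t → ∑ e, ∑ f, a i e * a i f * X e f = (b i) ^ 2) :
    ∀ i j, i ≠ t → j ≠ t → i ≠ j →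
      ∑ e, ∑ f, a i e * a j f * X e f = b i * b j := by
  have hX : X.PosSemidef := hY.submatrix Sum.inl
  have hXsymm : X.IsSymm := isHermitian_iff_isSymm.mp hX.isHermitian
  have hker : ∀ k, k ≠ t → b k = 0 → X *ᵥ a k = 0 := fun k hkt hbk =>
    (hX.dotProduct_mulVec_zero_iff (a k)).mp <| by
      simpa [sum_sum_mul_mul_eq_dotProduct_mulVec, hbk] using hsq k hkt
  intro i j hit hjt hij
  rw [sum_sum_mul_mul_eq_dotProduct_mulVec]
  have hb_off : ∀ k, k ≠ s → k ≠ t → b k = 0 := fun k hks hkt => by simp [hb k, hks, hkt]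
  rcases eq_zero_or_eq_zero_of_eq_zero_off_pair hb_off hit hjt hij with hbi | hbj
  · rw [hXsymm.dotProduct_mulVec_eq_zero_of_mulVec_eq_zero (hker i hit hbi), hbi, zero_mul]
  · rw [hker j hjt hbj, dotProduct_zero, hbj, mul_zero]

/-- under the PSD block constraint, `diag X = x` and the diagonal squared
linear constraints `⟨aᵢaᵢᵀ, X⟩ = bᵢ²` for `i ≠ t`, the off-diagonal squared linear
constraints `⟨aᵢaⱼᵀ, X⟩ = bᵢbⱼ` hold automatically for distinct `i, j ≠ t`. -/
theorem squared_linear_constraints_redundant {V : Type*} [Fintype V] [DecidableEq V]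
    (m : ℕ) (s t : V) (a : V → Fin m → ℝ) (b : V → ℝ)
    (hb : ∀ i, b i = if i = s then 1 else if i = t then -1 else 0)
    (X : Matrix (Fin m) (Fin m) ℝ) (x : Fin m → ℝ)
    (hY : (Matrix.fromBlocks X (Matrix.of fun e (_ : Unit) => x e)
        (Matrix.of fun (_ : Unit) e => x e) 1).PosSemidef)
    (hdiag : ∀ e, X e e = x e)
    (hsq : ∀ i, i ≠ t → ∑ e, ∑ f, a i e * a i f * X e f = (b i) ^ 2) :
    ∀ i j, i ≠ t → j ≠ t → i ≠ j →
      ∑ e, ∑ f, a i e * a j f * X e f = b i * b j :=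
  squared_linear_constraints_redundant_general m s t a b hb X x hY hsq
end

section
/- Let Y = [[X, x],[x^T, 1]] be a feasible solution of the SDP relaxation SDP_L, i.e. Y ⪰ 0, diag(X) = x, a_s^T x = b_s, and ⟨a_i a_i^T, X⟩ = b_i^2 for all i ∈ V\{t}. Then the span of the vectors (a_i^T, −b_i)^T for i ∈ V\{t} is contained in the null space of Y. -/
open Matrix
open scoped ComplexOrder

/-!
If `Y ⪰ 0` then `vᴴ Y v = 0` forces `Y v = 0`, so it suffices to show that the quadratic form of
`Y` vanishes at each generator `(aᵢ, -bᵢ)`. That value is `aᵢᵀ X aᵢ - 2 bᵢ (aᵢᵀ x) + bᵢ²`; the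
first term is `bᵢ²` by feasibility, and `bᵢ (aᵢᵀ x) = bᵢ²` because `bᵢ = 0` unless `i = s`,
where `aₛᵀ x = bₛ`.
-/

theorem Matrix.PosSemidef.mulVec_eq_zero_of_mem_span {n 𝕜 : Type*} [Fintype n] [DecidableEq n]
    [RCLike 𝕜] {Y : Matrix n n 𝕜} (hY : Y.PosSemidef) {S : Set (n → 𝕜)}
    (hS : ∀ v ∈ S, star v ⬝ᵥ Y *ᵥ v = 0) :
    ∀ u ∈ Submodule.span 𝕜 S, Y *ᵥ u = 0 := fun _ hu =>
  (Submodule.span_le (p := LinearMap.ker Y.mulVecLin)).2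
    (fun v hv => (hY.dotProduct_mulVec_zero_iff v).1 (hS v hv)) hu

theorem Matrix.dotProduct_mulVec_eq_sum_sum {n R : Type*} [Fintype n] [CommSemiring R]
    (X : Matrix n n R) (w : n → R) :
    w ⬝ᵥ X *ᵥ w = ∑ e, ∑ f, w e * w f * X e f := by
  simp only [dotProduct, mulVec, Finset.mul_sum]
  exact Finset.sum_congr rfl fun e _ => Finset.sum_congr rfl fun f _ => by ring

theorem Matrix.sumElim_dotProduct_fromBlocks_mulVec_sumElim {n R : Type*} [Fintype n]
    [CommRing R] (X : Matrix n n R) (x w : n → R) (c : R) :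
    Sum.elim w (fun _ => c) ⬝ᵥ (fromBlocks X (of fun e (_ : Unit) => x e)
        (of fun (_ : Unit) e => x e) 1 *ᵥ Sum.elim w (fun _ => c))
      = w ⬝ᵥ X *ᵥ w + 2 * c * (w ⬝ᵥ x) + c ^ 2 := by
  have hcol : (of fun e (_ : Unit) => x e) *ᵥ (fun _ => c) = c • x := by
    ext e; simp [mulVec, dotProduct, mul_comm]
  have hrow : (fun _ : Unit => c) ⬝ᵥ (of fun (_ : Unit) e => x e) *ᵥ w = c * (w ⬝ᵥ x) := by
    simp [mulVec, dotProduct, mul_comm]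
  have hcorner : (fun _ : Unit => c) ⬝ᵥ (fun _ => c) = c ^ 2 := by
    simp [dotProduct, sq]
  simp only [fromBlocks_mulVec, sumElim_dotProduct_sumElim, Sum.elim_comp_inl,
    Sum.elim_comp_inr, one_mulVec, dotProduct_add, hcol, hrow, hcorner, dotProduct_smul,
    smul_eq_mul]
  ring

theorem span_in_nullspace_SDPL_general {V : Type*} [Fintype V] [DecidableEq V] (m : ℕ)
    (s t : V) (a : V → Fin m → ℝ) (b : V → ℝ)
    (hb : ∀ i, b i = if i = s then 1 else if i = t then -1 else 0)
    (X : Matrix (Fin m) (Fin m) ℝ) (x : Fin m → ℝ)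
    (hY : (Matrix.fromBlocks X (Matrix.of fun e (_ : Unit) => x e)
        (Matrix.of fun (_ : Unit) e => x e) 1).PosSemidef)
    (hs : ∑ e, a s e * x e = b s)
    (hsq : ∀ i, i ≠ t → ∑ e, ∑ f, a i e * a i f * X e f = (b i) ^ 2) :
    ∀ u ∈ Submodule.span ℝ
        {v : Fin m ⊕ Unit → ℝ | ∃ i, i ≠ t ∧ v = Sum.elim (a i) (fun _ => -(b i))},
      (Matrix.fromBlocks X (Matrix.of fun e (_ : Unit) => x e)
        (Matrix.of fun (_ : Unit) e => x e) 1).mulVec u = 0 := by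
  refine hY.mulVec_eq_zero_of_mem_span ?_
  rintro _ ⟨i, hit, rfl⟩
  have hbx : b i * (a i ⬝ᵥ x) = b i ^ 2 := by
    by_cases his : i = s
    · subst his
      rw [dotProduct, hs, sq]
    · simp [hb i, his, hit]
  rw [star_trivial, sumElim_dotProduct_fromBlocks_mulVec_sumElim,
    dotProduct_mulVec_eq_sum_sum, hsq i hit]
  linear_combination (-2) * hbx

/-- if `Y = [[X, x], [xᵀ, 1]]` is feasible for the relaxation `SDP_L`,
then the span of the vectors `(aᵢᵀ, -bᵢ)ᵀ`, `i ∈ V \ {t}`, is contained in the null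
space of `Y`. -/
theorem span_in_nullspace_SDPL {V : Type*} [Fintype V] [DecidableEq V] (m : ℕ)
    (s t : V) (a : V → Fin m → ℝ) (b : V → ℝ)
    (hb : ∀ i, b i = if i = s then 1 else if i = t then -1 else 0)
    (X : Matrix (Fin m) (Fin m) ℝ) (x : Fin m → ℝ)
    (hY : (Matrix.fromBlocks X (Matrix.of fun e (_ : Unit) => x e)
        (Matrix.of fun (_ : Unit) e => x e) 1).PosSemidef)
    (hdiag : ∀ e, X e e = x e)
    (hs : ∑ e, a s e * x e = b s)
    (hsq : ∀ i, i ≠ t → ∑ e, ∑ f, a i e * a i f * X e f = (b i) ^ 2) :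
    ∀ u ∈ Submodule.span ℝ
        {v : Fin m ⊕ Unit → ℝ | ∃ i, i ≠ t ∧ v = Sum.elim (a i) (fun _ => -(b i))},
      (Matrix.fromBlocks X (Matrix.of fun e (_ : Unit) => x e)
        (Matrix.of fun (_ : Unit) e => x e) 1).mulVec u = 0 :=
  span_in_nullspace_SDPL_general m s t a b hb X x hY hs hsq
end

section
/- Let (X,x) be feasible for SDP_NL on a directed acyclic graph G (i.e., [[X,x],[x^T,1]] ⪰ 0, diag(X) = x, a_s^T x = 1, ⟨a_i a_i^T, X⟩ = b_i^2 for all i ≠ t, and X ≥ 0 entrywise). Then for any two arcs e, f such that no s–t path of G contains both e and f, the entry X_{e,f} equals 0. -/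
/-!
Put `Y = [[X, x], [xᵀ, 1]]`. For `i ≠ t` the constraints make the quadratic form of `Y` vanish at
`(a_i, -b_i)`, so `Y` kills this vector and `X a_i = b_i x`. Hence every row `X_f` of `X` is a
nonnegative `s`-`t` flow of value `x_f = X_ff`. If `X_fe > 0`, following arcs of positive flow
forwards and backwards from `e` gives an `s`-`t` path through `e`. In the topological order this
path crosses the cut between the vertices `≤ src f` and the rest. Every such cut carries the total
value `X_ff`, and `f` alone already carries `X_ff` across this one, so `f` is its only arc of
positive flow and the path passes through `f` as well.
-/

open Finset Matrix

theorem Matrix.PosSemidef.mulVec_eq_smul_of_dotProduct_mulVec_eq_sq {ι : Type*} [Fintype ι]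
    {X : Matrix ι ι ℝ} {x : ι → ℝ}
    (hY : (fromBlocks X (of fun e (_ : Unit) => x e) (of fun (_ : Unit) e => x e) 1).PosSemidef)
    {y : ι → ℝ} {β : ℝ} (hquad : y ⬝ᵥ X *ᵥ y = β ^ 2) (hlin : β = 0 ∨ y ⬝ᵥ x = β) :
    X *ᵥ y = β • x := by
  set Y := fromBlocks X (of fun e (_ : Unit) => x e) (of fun (_ : Unit) e => x e) 1
  set w : ι ⊕ Unit → ℝ := Sum.elim y fun _ => -β
  have hYw : Y *ᵥ w = Sum.elim (X *ᵥ y - β • x) fun _ => x ⬝ᵥ y - β := by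
    ext (i | i) <;> simp [Y, w, mulVec, dotProduct, sub_eq_add_neg, mul_comm]
  have hw : star w ⬝ᵥ Y *ᵥ w = 0 := by
    rw [hYw, star_trivial, sumElim_dotProduct_sumElim, dotProduct_sub, hquad, dotProduct_smul,
      smul_eq_mul, dotProduct_comm x y]
    rcases hlin with rfl | h
    · simp
    · rw [h]
      simp only [dotProduct, Finset.univ_unique, Finset.sum_singleton]
      ring
  funext i
  simpa [hYw, sub_eq_zero] using congrFun ((hY.dotProduct_mulVec_zero_iff w).1 hw) (Sum.inl i)

inductive ArcPath {V ι : Type*} (src tgt : ι → V) : V → V → List ι → Prop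
  | nil (u : V) : ArcPath src tgt u u []
  | cons (g : ι) {v : V} {l : List ι} :
      ArcPath src tgt (tgt g) v l → ArcPath src tgt (src g) v (g :: l)

namespace ArcPath

variable {V ι : Type*} {src tgt : ι → V} {u v w : V} {l l' : List ι}

theorem append (h : ArcPath src tgt u v l) (h' : ArcPath src tgt v w l') :
    ArcPath src tgt u w (l ++ l') := by
  induction h with
  | nil => exact h'
  | cons g _ ih => exact .cons g (ih h')

theorem exists_mem_cross [LinearOrder V] (h : ArcPath src tgt u v l) {k : V} (hu : u ≤ k)
    (hv : k < v) : ∃ g ∈ l, src g ≤ k ∧ k < tgt g := by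
  induction h with
  | nil u => exact absurd (hu.trans_lt hv) (lt_irrefl u)
  | cons g _ ih =>
    by_cases hg : k < tgt g
    · exact ⟨g, List.mem_cons_self, hu, hg⟩
    · obtain ⟨g', hg', hk⟩ := ih (not_lt.1 hg) hv
      exact ⟨g', List.mem_cons_of_mem g hg', hk⟩

theorem exists_strictMono_vertices [Preorder V] (h : ArcPath src tgt u v l)
    (hdag : ∀ g, src g < tgt g) :
    ∃ (c : Fin (l.length + 1) → V) (es : Fin l.length → ι),
      (∀ r, src (es r) = c r.castSucc ∧ tgt (es r) = c r.succ) ∧ StrictMono c ∧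
      c 0 = u ∧ c (Fin.last l.length) = v ∧ ∀ g ∈ l, ∃ r, es r = g := by
  induction h with
  | nil u =>
    exact ⟨fun _ => u, Fin.elim0, fun r => r.elim0, fun ⟨0, _⟩ ⟨0, _⟩ h => (lt_irrefl _ h).elim,
      rfl, rfl, by simp⟩
  | cons g _ ih =>
    obtain ⟨c, es, hlink, hmono, h0, hlast, hmem⟩ := ih
    refine ⟨Fin.cons (src g) c, Fin.cons g es, Fin.cases ⟨rfl, h0.symm⟩ fun r => ?_,
      hmono.vecCons (h0 ▸ hdag g), rfl, hlast, ?_⟩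
    · simpa using hlink r
    · simp only [List.mem_cons, forall_eq_or_imp]
      exact ⟨⟨0, rfl⟩, fun g' hg' => let ⟨r, hr⟩ := hmem g' hg'; ⟨r.succ, hr⟩⟩

end ArcPath

def incidence {V ι : Type*} [DecidableEq V] (src tgt : ι → V) (v : V) (g : ι) : ℝ :=
  if src g = v then 1 else if tgt g = v then -1 else 0

section Flow

variable {V ι : Type*} {src tgt : ι → V}

theorem incidence_eq_sub [DecidableEq V] {g : ι} (hg : src g ≠ tgt g) (v : V) :
    incidence src tgt v g = (if src g = v then 1 else 0) - (if tgt g = v then 1 else 0) := by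
  unfold incidence
  split_ifs with h₁ h₂ <;> first | exact absurd (h₁.trans h₂.symm) hg | norm_num

theorem dotProduct_incidence [Fintype ι] [DecidableEq V] (hne : ∀ g, src g ≠ tgt g)
    (F : ι → ℝ) (v : V) :
    F ⬝ᵥ incidence src tgt v = ∑ g with src g = v, F g - ∑ g with tgt g = v, F g := by
  simp only [dotProduct, incidence_eq_sub (hne _), mul_sub, mul_ite, mul_one, mul_zero,
    sum_sub_distrib, sum_filter]

theorem sum_Iic_incidence [LinearOrder V] [LocallyFiniteOrderBot V] (hdag : ∀ g, src g < tgt g)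
    (k : V) (g : ι) :
    ∑ v ∈ Iic k, incidence src tgt v g = if src g ≤ k ∧ k < tgt g then 1 else 0 := by
  simp only [incidence_eq_sub (hdag g).ne, sum_sub_distrib, sum_ite_eq, mem_Iic]
  have := hdag g
  split_ifs <;> grind

def IsFlow [Fintype ι] {n : ℕ} (src tgt : ι → Fin (n + 1)) (F : ι → ℝ) (c : ℝ) : Prop :=
  ∀ v, v ≠ Fin.last n → F ⬝ᵥ incidence src tgt v = if v = 0 then c else 0

namespace IsFlow

variable [Fintype ι] {n : ℕ} {src tgt : ι → Fin (n + 1)} {F : ι → ℝ} {c : ℝ} {f : ι}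

theorem inflow_eq_outflow (hF : IsFlow src tgt F c) (hdag : ∀ g, src g < tgt g)
    {v : Fin (n + 1)} (h0 : v ≠ 0) (hlast : v ≠ Fin.last n) :
    ∑ g with tgt g = v, F g = ∑ g with src g = v, F g := by
  have := hF v hlast
  rw [dotProduct_incidence (fun g => (hdag g).ne), if_neg h0] at this
  linarith

theorem sum_cut (hF : IsFlow src tgt F c) (hdag : ∀ g, src g < tgt g) {k : Fin (n + 1)}
    (hk : k ≠ Fin.last n) : ∑ g with src g ≤ k ∧ k < tgt g, F g = c := by
  calc ∑ g with src g ≤ k ∧ k < tgt g, F g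
      = ∑ g, F g * ∑ v ∈ Iic k, incidence src tgt v g := by
        simp only [sum_Iic_incidence hdag, mul_ite, mul_one, mul_zero, sum_filter]
    _ = ∑ v ∈ Iic k, F ⬝ᵥ incidence src tgt v := by
        simp only [mul_sum, dotProduct]; exact sum_comm
    _ = ∑ v ∈ Iic k, if v = 0 then c else 0 :=
        sum_congr rfl fun v hv => hF v ((mem_Iic.1 hv).trans_lt (Fin.lt_last_iff_ne_last.2 hk)).ne
    _ = c := by simp

theorem exists_pos_path_to_last (hF : IsFlow src tgt F c) (hdag : ∀ g, src g < tgt g)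
    (hF0 : ∀ g, 0 ≤ F g) {g : ι} (hg : 0 < F g) :
    ∃ l, ArcPath src tgt (tgt g) (Fin.last n) l ∧ ∀ g' ∈ l, 0 < F g' := by
  suffices ∀ v, (∃ g, tgt g = v ∧ 0 < F g) →
      ∃ l, ArcPath src tgt v (Fin.last n) l ∧ ∀ g' ∈ l, 0 < F g' from this _ ⟨g, rfl, hg⟩
  intro v
  induction v using WellFoundedGT.induction with
  | _ v ih =>
  rintro ⟨g, rfl, hg⟩
  by_cases hlast : tgt g = Fin.last n
  · exact ⟨[], hlast ▸ .nil _, by simp⟩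
  have hout : 0 < ∑ g' with src g' = tgt g, F g' := by
    rw [← hF.inflow_eq_outflow hdag ((Fin.zero_le _).trans_lt (hdag g)).ne' hlast]
    exact (sum_pos_iff_of_nonneg fun g' _ => hF0 g').2 ⟨g, by simp, hg⟩
  obtain ⟨g', hg'src, hg'⟩ := (sum_pos_iff_of_nonneg fun g' _ => hF0 g').1 hout
  rw [mem_filter] at hg'src
  obtain ⟨l, hl, hpos⟩ := ih (tgt g') (hg'src.2 ▸ hdag g') ⟨g', rfl, hg'⟩
  exact ⟨g' :: l, hg'src.2 ▸ .cons g' hl, List.forall_mem_cons.2 ⟨hg', hpos⟩⟩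

theorem exists_pos_path_from_zero (hF : IsFlow src tgt F c) (hdag : ∀ g, src g < tgt g)
    (hF0 : ∀ g, 0 ≤ F g) {g : ι} (hg : 0 < F g) :
    ∃ l, ArcPath src tgt 0 (src g) l ∧ ∀ g' ∈ l, 0 < F g' := by
  suffices ∀ v, (∃ g, src g = v ∧ 0 < F g) →
      ∃ l, ArcPath src tgt 0 v l ∧ ∀ g' ∈ l, 0 < F g' from this _ ⟨g, rfl, hg⟩
  intro v
  induction v using WellFoundedLT.induction with
  | _ v ih =>
  rintro ⟨g, rfl, hg⟩
  by_cases h0 : src g = 0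
  · exact ⟨[], h0 ▸ .nil _, by simp⟩
  have hin : 0 < ∑ g' with tgt g' = src g, F g' := by
    rw [hF.inflow_eq_outflow hdag h0 ((hdag g).trans_le (Fin.le_last _)).ne]
    exact (sum_pos_iff_of_nonneg fun g' _ => hF0 g').2 ⟨g, by simp, hg⟩
  obtain ⟨g', hg'tgt, hg'⟩ := (sum_pos_iff_of_nonneg fun g' _ => hF0 g').1 hin
  rw [mem_filter] at hg'tgt
  obtain ⟨l, hl, hpos⟩ := ih (src g') (hg'tgt.2 ▸ hdag g') ⟨g', rfl, hg'⟩
  refine ⟨l ++ [g'], hl.append (hg'tgt.2 ▸ .cons g' (.nil _)), ?_⟩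
  simpa [or_imp, forall_and] using ⟨hpos, hg'⟩

theorem mem_of_pos_path (hF : IsFlow src tgt F (F f)) (hdag : ∀ g, src g < tgt g)
    (hF0 : ∀ g, 0 ≤ F g) {l : List ι} (hl : ArcPath src tgt 0 (Fin.last n) l)
    (hpos : ∀ g ∈ l, 0 < F g) : f ∈ l := by
  have hf : src f ≠ Fin.last n := ((hdag f).trans_le (Fin.le_last _)).ne
  obtain ⟨g, hgl, hcross⟩ := hl.exists_mem_cross (Fin.zero_le _) (Fin.lt_last_iff_ne_last.2 hf)
  by_contra hfl
  have hgf : g ≠ f := fun h => hfl (h ▸ hgl)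
  have : F g + F f ≤ F f := by
    classical
    rw [← sum_pair hgf, ← hF.sum_cut hdag hf]
    refine sum_le_sum_of_subset_of_nonneg ?_ fun g' _ _ => hF0 g'
    simp [insert_subset_iff, hcross, hdag f]
  linarith [hpos g hgl]

theorem exists_path_mem_mem (hF : IsFlow src tgt F (F f)) (hdag : ∀ g, src g < tgt g)
    (hF0 : ∀ g, 0 ≤ F g) {e : ι} (he : 0 < F e) :
    ∃ l, ArcPath src tgt 0 (Fin.last n) l ∧ e ∈ l ∧ f ∈ l := by
  obtain ⟨l₁, hl₁, hpos₁⟩ := hF.exists_pos_path_from_zero hdag hF0 he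
  obtain ⟨l₂, hl₂, hpos₂⟩ := hF.exists_pos_path_to_last hdag hF0 he
  have hl := hl₁.append (.cons e hl₂)
  refine ⟨_, hl, by simp, hF.mem_of_pos_path hdag hF0 hl ?_⟩
  simpa [or_imp, forall_and] using ⟨hpos₁, he, hpos₂⟩

end IsFlow

end Flow

/-- if `(X, x)` is feasible for `SDP_NL` on a DAG (given with a
topological ordering of its vertices) and no `s`-`t` path contains both arcs `e` and
`f`, then `X_{e,f} = 0`. -/
theorem zero_pattern_SDP_NL (n m : ℕ) (src tgt : Fin m → Fin (n + 1))
    (hdag : ∀ e, src e < tgt e)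
    (s t : Fin (n + 1)) (hs : s = 0) (ht : t = Fin.last n)
    (a : Fin (n + 1) → Fin m → ℝ)
    (ha : ∀ i e, a i e = if src e = i then 1 else if tgt e = i then -1 else 0)
    (b : Fin (n + 1) → ℝ)
    (hb : ∀ i, b i = if i = s then 1 else if i = t then -1 else 0)
    (X : Matrix (Fin m) (Fin m) ℝ) (x : Fin m → ℝ)
    (hY : (Matrix.fromBlocks X (Matrix.of fun e (_ : Unit) => x e)
        (Matrix.of fun (_ : Unit) e => x e) 1).PosSemidef)
    (hdiag : ∀ e, X e e = x e)
    (hsx : ∑ e, a s e * x e = b s)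
    (hsq : ∀ i, i ≠ t → ∑ e, ∑ f, a i e * a i f * X e f = (b i) ^ 2)
    (hXnn : ∀ e f, 0 ≤ X e f)
    (e f : Fin m)
    (hNoPath : ¬ ∃ (len : ℕ) (c : Fin (len + 1) → Fin (n + 1)) (es : Fin len → Fin m),
      (∀ r : Fin len, src (es r) = c r.castSucc ∧ tgt (es r) = c r.succ) ∧
      Function.Injective c ∧ c 0 = s ∧ c (Fin.last len) = t ∧
      (∃ r : Fin len, es r = e) ∧ (∃ r : Fin len, es r = f)) :
    X e f = 0 := by
  subst hs ht
  obtain rfl : a = incidence src tgt := funext₂ ha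
  have hker (i) (hi : i ≠ Fin.last n) : X *ᵥ incidence src tgt i = b i • x := by
    refine hY.mulVec_eq_smul_of_dotProduct_mulVec_eq_sq ?_ ?_
    · simpa [dotProduct, mulVec, mul_sum, mul_comm, mul_left_comm] using hsq i hi
    · by_cases h0 : i = 0
      · exact .inr (h0 ▸ hsx)
      · exact .inl (by rw [hb, if_neg h0, if_neg hi])
  have hflow : IsFlow src tgt (X f) (X f f) := fun v hv => by
    show (X *ᵥ _) f = _
    rw [hker v hv, Pi.smul_apply, hb, hdiag, if_neg hv]
    split_ifs <;> simp
  have hsymm : X f e = X e f := (isHermitian_fromBlocks_iff.1 hY.isHermitian).1.apply e f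
  by_contra hne
  obtain ⟨l, hl, hel, hfl⟩ :=
    hflow.exists_path_mem_mem hdag (hXnn f) (hsymm ▸ (hXnn e f).lt_of_ne' hne)
  obtain ⟨c, es, hlink, hmono, h0, hlast, hmem⟩ := hl.exists_strictMono_vertices hdag
  exact hNoPath ⟨_, c, es, hlink, hmono.injective, h0, hlast, hmem e hel, hmem f hfl⟩
end

section
/- For the grid graph G_{p,q}, the (p−1)(q−1) cycle vectors (w_{ij}^T, 0)^T arising from the unit square cycles (v_{i,j}, v_{i,j+1}, v_{i+1,j+1}, v_{i+1,j}), together with (w^T, 1)^T where w is the characteristic vector of the path (v_{1,1},…,v_{1,q},…,v_{p,q}), are m − n + 2 linearly independent vectors in ℝ^{m+1} that are orthogonal to every column (a_k^T, −b_k)^T of T, k ∈ V\{t}. -/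
open Finset

/-- Vertices of the grid graph `G_{p,q}` (0-indexed). -/
abbrev GridVertex (p q : ℕ) := Fin p × Fin q

/-- Arcs of the grid graph `G_{p,q}`: horizontal arcs `(i,j) → (i,j+1)` (left summand)
and vertical arcs `(i,j) → (i+1,j)` (right summand); there are `2pq - p - q` of them. -/
abbrev GridArc (p q : ℕ) := (Fin p × Fin (q - 1)) ⊕ (Fin (p - 1) × Fin q)

/-- Source vertex of a grid arc. -/
def gridSrc (p q : ℕ) : GridArc p q → GridVertex p q
  | .inl (r, c) => (r, ⟨c.1, by have := c.isLt; omega⟩)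
  | .inr (r, c) => (⟨r.1, by have := r.isLt; omega⟩, c)

/-- Target vertex of a grid arc. -/
def gridTgt (p q : ℕ) : GridArc p q → GridVertex p q
  | .inl (r, c) => (r, ⟨c.1 + 1, by have := c.isLt; omega⟩)
  | .inr (r, c) => (⟨r.1 + 1, by have := r.isLt; omega⟩, c)

/-- Row of the incidence matrix of `G_{p,q}` at vertex `k`. -/
def gridIncidence (p q : ℕ) (k : GridVertex p q) (e : GridArc p q) : ℝ :=
  if gridSrc p q e = k then 1 else if gridTgt p q e = k then -1 else 0

/-- The vector `w_{ij}` induced by the unit square cycle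
`(v_{i,j}, v_{i,j+1}, v_{i+1,j+1}, v_{i+1,j})`. -/
def squareCycleVec (p q : ℕ) (ij : Fin (p - 1) × Fin (q - 1)) : GridArc p q → ℝ
  | .inl (r, c) =>
      if (r.1, c.1) = (ij.1.1, ij.2.1) then 1
      else if (r.1, c.1) = (ij.1.1 + 1, ij.2.1) then -1 else 0
  | .inr (r, c) =>
      if (r.1, c.1) = (ij.1.1, ij.2.1 + 1) then 1
      else if (r.1, c.1) = (ij.1.1, ij.2.1) then -1 else 0

/-- The characteristic vector of the path `(v_{1,1}, …, v_{1,q}, …, v_{p,q})` going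
along the first row and then down the last column. -/
def hookPathVec (p q : ℕ) : GridArc p q → ℝ
  | .inl (r, _) => if r.1 = 0 then 1 else 0
  | .inr (_, c) => if c.1 = q - 1 then 1 else 0

/-!
The last coordinate forces the coefficient of the hook vector to vanish. The vertical arc on the
left side of square `(i, j)` lies only on the squares `(i, j)` and `(i, j - 1)`, so evaluating a
vanishing combination at these arcs is a triangular system in the column index `j`.

For orthogonality, `x ⬝ᵥ a_k` is the net flow of `x` out of `k`: each arc `e` contributes
`[src e = k] - [tgt e = k]`, which cancels around a square and telescopes along the hook path
to `[k = s] - [k = t]`.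
-/

open Matrix

theorem linearIndependent_of_triangular {ι κ R α : Type*} [Ring R] [NoZeroDivisors R]
    [Preorder α] [WellFoundedLT α] (v : ι → κ → R) (f : ι → κ) (μ : ι → α)
    (hdiag : ∀ i, v i (f i) ≠ 0)
    (hlower : ∀ i j, j ≠ i → v j (f i) ≠ 0 → μ j < μ i) :
    LinearIndependent R v := by
  rw [linearIndependent_iff']
  intro s g hg i
  induction hμ : μ i using WellFoundedLT.induction generalizing i with
  | ind a ih =>
    intro hi
    have hsum : ∑ j ∈ s, g j * v j (f i) = 0 := by
      simpa using congrFun hg (f i)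
    rw [Finset.sum_eq_single i (fun j hj hji => ?_) (fun h => absurd hi h)] at hsum
    · exact (mul_eq_zero.mp hsum).resolve_right (hdiag i)
    · by_cases h : v j (f i) = 0
      · rw [h, mul_zero]
      · rw [ih _ (hμ ▸ hlower i j hji h) j rfl hj, zero_mul]

theorem gridSrc_ne_gridTgt (p q : ℕ) (e : GridArc p q) : gridSrc p q e ≠ gridTgt p q e := by
  rcases e with ⟨r, c⟩ | ⟨r, c⟩ <;> simp [gridSrc, gridTgt, Fin.ext_iff]

theorem gridIncidence_eq_sub (p q : ℕ) (k : GridVertex p q) (e : GridArc p q) :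
    gridIncidence p q k e =
      (if gridSrc p q e = k then 1 else 0) - (if gridTgt p q e = k then 1 else 0) := by
  unfold gridIncidence
  by_cases hs : gridSrc p q e = k
  · simp [hs, (hs ▸ gridSrc_ne_gridTgt p q e).symm]
  · by_cases ht : gridTgt p q e = k <;> simp [hs, ht]

theorem squareCycleVec_eq (p q : ℕ) (i : Fin (p - 1)) (j : Fin (q - 1)) :
    squareCycleVec p q (i, j) =
      Pi.single (.inl (⟨i, by omega⟩, j)) 1 - Pi.single (.inl (⟨i + 1, by omega⟩, j)) 1 +
      Pi.single (.inr (i, ⟨j + 1, by omega⟩)) 1 - Pi.single (.inr (i, ⟨j, by omega⟩)) 1 := by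
  funext e
  rcases e with ⟨r, c⟩ | ⟨r, c⟩ <;>
    simp only [squareCycleVec, Pi.add_apply, Pi.sub_apply, Pi.single_apply, Sum.inl.injEq,
      Sum.inr.injEq, reduceCtorEq, Prod.ext_iff, Fin.ext_iff] <;>
    split_ifs <;> first | omega | norm_num

theorem squareCycleVec_dotProduct_gridIncidence (p q : ℕ) (ij : Fin (p - 1) × Fin (q - 1))
    (k : GridVertex p q) : squareCycleVec p q ij ⬝ᵥ gridIncidence p q k = 0 := by
  obtain ⟨i, j⟩ := ij
  -- With `k` destructured, vertex equalities become coordinate equalities, so `ring` can match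
  -- corners whose `Fin.mk` carry different proofs.
  obtain ⟨⟨a, _⟩, ⟨b, _⟩⟩ := k
  simp only [squareCycleVec_eq, add_dotProduct, sub_dotProduct, single_dotProduct, one_mul,
    gridIncidence_eq_sub, gridSrc, gridTgt, Prod.mk.injEq, Fin.mk.injEq]
  ring

theorem Fin.sum_univ_sub_succ {M : Type*} [AddCommGroup M] (f : ℕ → M) (n : ℕ) :
    ∑ i : Fin n, (f i - f (i + 1)) = f 0 - f n := by
  rw [Fin.sum_univ_eq_sum_range (fun i => f i - f (i + 1)), Finset.sum_range_sub']

theorem hookPathVec_dotProduct (p q : ℕ) (hp : 0 < p) (hq : 0 < q) (a : GridArc p q → ℝ) :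
    hookPathVec p q ⬝ᵥ a =
      ∑ c : Fin (q - 1), a (.inl (⟨0, hp⟩, c)) +
        ∑ r : Fin (p - 1), a (.inr (r, ⟨q - 1, Nat.sub_one_lt_of_lt hq⟩)) := by
  simp only [dotProduct, Fintype.sum_sum_type, Fintype.sum_prod_type, hookPathVec, ite_mul,
    one_mul, zero_mul]
  congr 1
  · rw [Fintype.sum_eq_single ⟨0, hp⟩ fun r hr => by simp [Fin.ext_iff.not.mp hr]]
    simp
  · refine Fintype.sum_congr _ _ fun r => ?_
    rw [Fintype.sum_eq_single (⟨q - 1, Nat.sub_one_lt_of_lt hq⟩ : Fin q)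
      fun c hc => by simp [Fin.ext_iff.not.mp hc]]
    simp

theorem hookPathVec_dotProduct_gridIncidence (p q : ℕ) (hp : 0 < p) (hq : 0 < q)
    (k : GridVertex p q) :
    hookPathVec p q ⬝ᵥ gridIncidence p q k =
      (if (⟨0, hp⟩, ⟨0, hq⟩) = k then 1 else 0) -
        (if (⟨p - 1, Nat.sub_one_lt_of_lt hp⟩, ⟨q - 1, Nat.sub_one_lt_of_lt hq⟩) = k then 1
          else 0) := by
  obtain ⟨⟨a, _⟩, ⟨b, _⟩⟩ := k
  rw [hookPathVec_dotProduct p q hp hq]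
  simp only [gridIncidence_eq_sub, gridSrc, gridTgt, Prod.mk.injEq, Fin.mk.injEq]
  rw [Fin.sum_univ_sub_succ (fun c => if 0 = a ∧ c = b then (1 : ℝ) else 0),
    Fin.sum_univ_sub_succ (fun r => if r = a ∧ q - 1 = b then (1 : ℝ) else 0)]
  ring

theorem squareCycleVec_inr_castLE_self (p q : ℕ) (i : Fin (p - 1)) (j : Fin (q - 1)) :
    squareCycleVec p q (i, j) (.inr (i, j.castLE (Nat.sub_le q 1))) = -1 := by
  simp [squareCycleVec]

theorem lt_of_squareCycleVec_inr_castLE_ne_zero {p q : ℕ} {ij : Fin (p - 1) × Fin (q - 1)}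
    {i : Fin (p - 1)} {j : Fin (q - 1)} (hne : ij ≠ (i, j))
    (h : squareCycleVec p q ij (.inr (i, j.castLE (Nat.sub_le q 1))) ≠ 0) : ij.2 < j := by
  obtain ⟨i', j'⟩ := ij
  simp only [squareCycleVec, Fin.val_castLE, Prod.mk.injEq] at h
  simp only [ne_eq, Prod.mk.injEq, Fin.ext_iff] at hne
  rw [show (i', j').2 = j' from rfl, Fin.lt_def]
  split_ifs at h with hright hleft
  · omega
  · exact absurd ⟨hleft.1.symm, hleft.2.symm⟩ hne
  · exact absurd rfl h

theorem hookPathVec_inr_castLE (p q : ℕ) (r : Fin (p - 1)) (c : Fin (q - 1)) :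
    hookPathVec p q (.inr (r, c.castLE (Nat.sub_le q 1))) = 0 := by
  simp only [hookPathVec, Fin.val_castLE]
  exact if_neg (by omega)

theorem linearIndependent_squareCycleVec_hookPathVec (p q : ℕ) :
    LinearIndependent ℝ (Sum.elim
      (fun ij => Sum.elim (squareCycleVec p q ij) (fun _ : Unit => (0 : ℝ)))
      (fun _ : Unit => Sum.elim (hookPathVec p q) (fun _ : Unit => (1 : ℝ)))) := by
  refine linearIndependent_of_triangular _
    (Sum.map (fun ij => .inr (ij.1, ij.2.castLE (Nat.sub_le q 1))) id)
    (Sum.elim (fun ij => ij.2.val) (fun _ => 0)) ?_ ?_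
  · rintro (⟨i, j⟩ | ⟨⟩)
    · simp [squareCycleVec_inr_castLE_self]
    · simp
  · rintro (⟨i, j⟩ | ⟨⟩) (ij | ⟨⟩) hne h
    · exact lt_of_squareCycleVec_inr_castLE_ne_zero (by simpa using hne) (by simpa using h)
    · simp [hookPathVec_inr_castLE] at h
    · simp at h
    · simp at hne

/-- for the grid graph `G_{p,q}`, the `(p-1)(q-1)` augmented unit-square
cycle vectors `(w_{ij}ᵀ, 0)ᵀ` together with `(wᵀ, 1)ᵀ` (with `w` the characteristic
vector of the hook path) are `m - n + 2` linearly independent vectors of `ℝ^{m+1}`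
orthogonal to every column `(a_kᵀ, -b_k)ᵀ` of `T`, `k ∈ V \ {t}`. -/
theorem grid_cycle_vectors_basis (p q : ℕ) (hp : 0 < p) (hq : 0 < q)
    (s : GridVertex p q) (hs : s = (⟨0, hp⟩, ⟨0, hq⟩))
    (t : GridVertex p q) (ht : t = (⟨p - 1, by omega⟩, ⟨q - 1, by omega⟩))
    (b : GridVertex p q → ℝ)
    (hb : ∀ v, b v = if v = s then 1 else if v = t then -1 else 0)
    (fam : (Fin (p - 1) × Fin (q - 1)) ⊕ Unit → (GridArc p q ⊕ Unit → ℝ))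
    (hfam : fam = Sum.elim
      (fun ij => Sum.elim (squareCycleVec p q ij) (fun _ => 0))
      (fun _ => Sum.elim (hookPathVec p q) (fun _ => 1))) :
    (Fintype.card ((Fin (p - 1) × Fin (q - 1)) ⊕ Unit) : ℤ) =
        ((2 * (p : ℤ) * q - p - q) - (p : ℤ) * q) + 2 ∧
    LinearIndependent ℝ fam ∧
    ∀ k : GridVertex p q, k ≠ t → ∀ idx,
      ∑ r : GridArc p q ⊕ Unit,
        fam idx r * Sum.elim (gridIncidence p q k) (fun _ => -(b k)) r = 0 := by
  subst hfam
  refine ⟨?_, linearIndependent_squareCycleVec_hookPathVec p q, fun k hk idx => ?_⟩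
  · simp only [Fintype.card_sum, Fintype.card_prod, Fintype.card_fin, Fintype.card_unit]
    push_cast [Nat.cast_sub hp, Nat.cast_sub hq]
    ring
  · change _ ⬝ᵥ _ = 0
    rcases idx with ij | ⟨⟩
    · simp [sumElim_dotProduct_sumElim, squareCycleVec_dotProduct_gridIncidence]
    · rw [Sum.elim_inr, sumElim_dotProduct_sumElim, hookPathVec_dotProduct_gridIncidence p q hp hq,
        hb, ← hs, ← ht]
      simp [hk, hk.symm, eq_comm (a := s)]
end
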